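/- arXiv:2310.09701 — 3 statements merged into one kernel-verified Lean document; each statement's English description precedes it below -/
import Mathlib

section
/- Let f0, f1, f2 be probability density functions on (0,1) with f0 ≡ 1, and suppose f1/f0 and f2/f0 are non-increasing. Define Lfdr(x,y) = (ξ00·f0(x)f0(y) + ξ01·f0(x)f2(y) + ξ10·f1(x)f0(y)) / (ξ00·f0(x)f0(y) + ξ01·f0(x)f2(y) + ξ10·f1(x)f0(y) + ξ11·f1(x)f2(y)), where ξ00, ξ01, ξ10, ξ11 are nonnegative reals summing to 1 with the denominator positive. Then Lfdr is monotone: for x1 ≤ x2 and y1 ≤ y2, Lfdr(x1,y1) ≤ Lfdr(x2,y2). -/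
open MeasureTheory Set

/-- Monotonicity of the local false discovery rate when the non-null density
ratios `f1/f0` and `f2/f0` are non-increasing (with `f0 ≡ 1` the uniform density). -/
theorem stmt_0 (f1 f2 : ℝ → ℝ) (ξ00 ξ01 ξ10 ξ11 : ℝ)
    (hξ00 : 0 ≤ ξ00) (hξ01 : 0 ≤ ξ01) (hξ10 : 0 ≤ ξ10) (hξ11 : 0 ≤ ξ11)
    (hsum : ξ00 + ξ01 + ξ10 + ξ11 = 1)
    (hf1nn : ∀ x ∈ Ioo (0:ℝ) 1, 0 ≤ f1 x)
    (hf2nn : ∀ y ∈ Ioo (0:ℝ) 1, 0 ≤ f2 y)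
    (hf1int : ∫ x in Ioo (0:ℝ) 1, f1 x = 1)
    (hf2int : ∫ y in Ioo (0:ℝ) 1, f2 y = 1)
    (hf1mono : ∀ x ∈ Ioo (0:ℝ) 1, ∀ x' ∈ Ioo (0:ℝ) 1, x ≤ x' → f1 x' ≤ f1 x)
    (hf2mono : ∀ y ∈ Ioo (0:ℝ) 1, ∀ y' ∈ Ioo (0:ℝ) 1, y ≤ y' → f2 y' ≤ f2 y)
    (hden : ∀ x ∈ Ioo (0:ℝ) 1, ∀ y ∈ Ioo (0:ℝ) 1,
      0 < ξ00 + ξ01 * f2 y + ξ10 * f1 x + ξ11 * f1 x * f2 y)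
    (Lfdr : ℝ → ℝ → ℝ)
    (hLfdr : ∀ x ∈ Ioo (0:ℝ) 1, ∀ y ∈ Ioo (0:ℝ) 1,
      Lfdr x y = (ξ00 + ξ01 * f2 y + ξ10 * f1 x) /
        (ξ00 + ξ01 * f2 y + ξ10 * f1 x + ξ11 * f1 x * f2 y)) :
    ∀ x1 ∈ Ioo (0:ℝ) 1, ∀ x2 ∈ Ioo (0:ℝ) 1, ∀ y1 ∈ Ioo (0:ℝ) 1, ∀ y2 ∈ Ioo (0:ℝ) 1,
      x1 ≤ x2 → y1 ≤ y2 → Lfdr x1 y1 ≤ Lfdr x2 y2 := by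
  intro x1 hx1 x2 hx2 y1 hy1 y2 hy2 hx hy
  have ha1 := hf1nn x1 hx1
  have ha2 := hf1nn x2 hx2
  have hb1 := hf2nn y1 hy1
  have hb2 := hf2nn y2 hy2
  have ha := hf1mono x1 hx1 x2 hx2 hx
  have hb := hf2mono y1 hy1 y2 hy2 hy
  have hD11 := hden x1 hx1 y1 hy1
  have hD21 := hden x2 hx2 y1 hy1
  have hD22 := hden x2 hx2 y2 hy2
  rw [hLfdr x1 hx1 y1 hy1, hLfdr x2 hx2 y2 hy2]
  have step1 : (ξ00 + ξ01 * f2 y1 + ξ10 * f1 x1) /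
        (ξ00 + ξ01 * f2 y1 + ξ10 * f1 x1 + ξ11 * f1 x1 * f2 y1) ≤
      (ξ00 + ξ01 * f2 y1 + ξ10 * f1 x2) /
        (ξ00 + ξ01 * f2 y1 + ξ10 * f1 x2 + ξ11 * f1 x2 * f2 y1) := by
    rw [div_le_div_iff₀ hD11 hD21]
    nlinarith [mul_nonneg (mul_nonneg hξ11 hb1) (mul_nonneg hξ00 (sub_nonneg.2 ha)),
      mul_nonneg (mul_nonneg hξ11 (mul_nonneg hξ01 (mul_nonneg hb1 hb1))) (sub_nonneg.2 ha)]
  have step2 : (ξ00 + ξ01 * f2 y1 + ξ10 * f1 x2) /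
        (ξ00 + ξ01 * f2 y1 + ξ10 * f1 x2 + ξ11 * f1 x2 * f2 y1) ≤
      (ξ00 + ξ01 * f2 y2 + ξ10 * f1 x2) /
        (ξ00 + ξ01 * f2 y2 + ξ10 * f1 x2 + ξ11 * f1 x2 * f2 y2) := by
    rw [div_le_div_iff₀ hD21 hD22]
    nlinarith [mul_nonneg (mul_nonneg hξ11 ha2) (mul_nonneg hξ00 (sub_nonneg.2 hb)),
      mul_nonneg (mul_nonneg hξ11 (mul_nonneg hξ10 (mul_nonneg ha2 ha2))) (sub_nonneg.2 hb)]
  linarith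
end

section
/- Density normalization of the packing construction: for a ∈ {0,1}ⁿ, define g_a on (0,1) by g_a(x) = 3 for 0 ≤ x < 1/12; g_a(x) = (4/3)((n−k+1)/n + a_k/n) + 1/2 for (k−1)/(2n) + 1/12 ≤ x < k/(2n) + 1/12 (k = 1,...,n); and g_a(x) = t_a for 7/12 ≤ x < 1, where t_a = 2/5 − 4/(5n) − (8/(5n²))∑_{k=1}ⁿ a_k. Then ∫₀¹ g_a(x) dx = 1, and for n sufficiently large g_a is non-increasing on (0,1). -/
open MeasureTheory Set

/-! `g` is a step function: the constant `3` on `[0, 1/12)`, then `n` steps of width `1/(2n)`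
whose heights `v k = (4/3)((n - k)/n + a k/n) + 1/2` (indexed from `k = 0`) drop by
`(4/3)(1 + a k - a (k+1))/n ≥ 0` from one step to the next, then the constant `t_a`
on `[7/12, 1)`. The mass is `1/4 + ∑ v k/(2n) + (5/12) t_a`, and with the Gauss sum
`∑ (n - k) = n(n+1)/2` the terms in `1/n` and in `∑ a k` cancel. Monotonicity across the two
jumps holds as soon as `n ≥ 2`, since then `v k ≤ 5/2 < 3`, while always
`t_a ≤ 2/5 < 1/2 ≤ v k`.
-/

section StepFunction

variable {g : ℝ → ℝ} {a b c : ℝ}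

theorem intervalIntegrable_of_eqOn_Ico (hab : a ≤ b) (hg : ∀ x ∈ Ico a b, g x = c) :
    IntervalIntegrable g volume a b :=
  (intervalIntegrable_iff_integrableOn_Ioc_of_le hab).2 <|
    ((integrableOn_const measure_Ico_lt_top.ne).congr_fun (fun x hx => (hg x hx).symm)
      measurableSet_Ico).congr_set_ae Ico_ae_eq_Ioc.symm

theorem intervalIntegral_of_eqOn_Ico (hab : a ≤ b) (hg : ∀ x ∈ Ico a b, g x = c) :
    ∫ x in a..b, g x = (b - a) * c := by
  rw [intervalIntegral.integral_of_le hab, integral_Ioc_eq_integral_Ioo,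
    setIntegral_congr_fun measurableSet_Ioo fun x hx => hg x (Ioo_subset_Ico_self hx)]
  simp [sub_nonneg.2 hab, mul_comm]

theorem antitoneOn_Ico_of_eqOn_Ico (hg : ∀ x ∈ Ico a b, g x = c) : AntitoneOn g (Ico a b) :=
  fun x hx y hy _ => (hg y hy).trans (hg x hx).symm |>.le

theorem AntitoneOn.Ico_union_Ico (h₁ : AntitoneOn g (Ico a b)) (h₂ : AntitoneOn g (Ico b c))
    (h₁₂ : ∀ x ∈ Ico a b, ∀ y ∈ Ico b c, g y ≤ g x) : AntitoneOn g (Ico a c) := by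
  intro x hx y hy hxy
  rcases lt_or_ge x b with hxb | hbx <;> rcases lt_or_ge y b with hyb | hby
  · exact h₁ ⟨hx.1, hxb⟩ ⟨hy.1, hyb⟩ hxy
  · exact h₁₂ x ⟨hx.1, hxb⟩ y ⟨hby, hy.2⟩
  · exact absurd (hxy.trans_lt hyb) hbx.not_gt
  · exact h₂ ⟨hbx, hx.2⟩ ⟨hby, hy.2⟩ hxy

end StepFunction

section UniformPartition

variable {g : ℝ → ℝ} {a h : ℝ} {n : ℕ}

theorem exists_mem_Ico_uniform (hh : 0 < h) {x : ℝ} (hx : x ∈ Ico a (a + n * h)) :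
    ∃ i : Fin n, x ∈ Ico (a + i * h) (a + (i + 1) * h) := by
  have hq : 0 ≤ (x - a) / h := div_nonneg (by linarith [hx.1]) hh.le
  have hqn : (x - a) / h < n := by rw [div_lt_iff₀ hh]; linarith [hx.2]
  refine ⟨⟨⌊(x - a) / h⌋₊, (Nat.floor_lt hq).2 hqn⟩, ?_, ?_⟩
  · have := Nat.floor_le hq
    rw [le_div_iff₀ hh] at this
    simp only; linarith
  · have := Nat.lt_floor_add_one ((x - a) / h)
    rw [div_lt_iff₀ hh] at this
    simp only; linarith

variable {v : Fin n → ℝ}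

theorem intervalIntegrable_uniform_piece (hh : 0 ≤ h)
    (hg : ∀ i : Fin n, ∀ x ∈ Ico (a + i * h) (a + (i + 1) * h), g x = v i) :
    ∀ i < n, IntervalIntegrable g volume (a + i * h) (a + (i + 1 : ℕ) * h) := fun i hi => by
  push_cast
  exact intervalIntegrable_of_eqOn_Ico (by nlinarith) (hg ⟨i, hi⟩)

theorem intervalIntegrable_uniform_step (hh : 0 ≤ h)
    (hg : ∀ i : Fin n, ∀ x ∈ Ico (a + i * h) (a + (i + 1) * h), g x = v i) :
    IntervalIntegrable g volume a (a + n * h) := by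
  simpa using IntervalIntegrable.trans_iterate (intervalIntegrable_uniform_piece hh hg)

theorem intervalIntegral_uniform_step (hh : 0 ≤ h)
    (hg : ∀ i : Fin n, ∀ x ∈ Ico (a + i * h) (a + (i + 1) * h), g x = v i) :
    ∫ x in a..a + n * h, g x = ∑ i, h * v i := by
  have hsum := intervalIntegral.sum_integral_adjacent_intervals
    (intervalIntegrable_uniform_piece hh hg)
  simp only [Nat.cast_zero, zero_mul, add_zero] at hsum
  rw [← hsum,
    ← Fin.sum_univ_eq_sum_range (fun i => ∫ x in a + i * h..a + (i + 1 : ℕ) * h, g x)]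
  refine Finset.sum_congr rfl fun i _ => ?_
  push_cast
  rw [intervalIntegral_of_eqOn_Ico (by nlinarith) (hg i)]
  ring

theorem antitoneOn_uniform_step (hh : 0 < h)
    (hg : ∀ i : Fin n, ∀ x ∈ Ico (a + i * h) (a + (i + 1) * h), g x = v i) (hv : Antitone v) :
    AntitoneOn g (Ico a (a + n * h)) := by
  intro x hx y hy hxy
  obtain ⟨i, hi⟩ := exists_mem_Ico_uniform hh hx
  obtain ⟨j, hj⟩ := exists_mem_Ico_uniform hh hy
  rw [hg i x hi, hg j y hj]
  refine hv (Fin.le_iff_val_le_val.2 ?_)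
  by_contra! hji
  have : (j : ℝ) + 1 ≤ i := by exact_mod_cast hji
  nlinarith [hi.1, hj.2]

end UniformPartition

section ThreePieces

variable {g : ℝ → ℝ} {a p b c d h : ℝ} {n : ℕ} {v : Fin n → ℝ}

theorem integral_Ioo_of_three_pieces (hlo : ∀ x ∈ Ico a p, g x = c)
    (hmid : ∀ i : Fin n, ∀ x ∈ Ico (p + i * h) (p + (i + 1) * h), g x = v i)
    (hhi : ∀ x ∈ Ico (p + n * h) b, g x = d) (hap : a ≤ p) (hh : 0 ≤ h)
    (hb : p + n * h ≤ b) :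
    ∫ x in Ioo a b, g x = (p - a) * c + ∑ i, h * v i + (b - (p + n * h)) * d := by
  have hlo_int := intervalIntegrable_of_eqOn_Ico hap hlo
  have hmid_int := intervalIntegrable_uniform_step hh hmid
  have hhi_int := intervalIntegrable_of_eqOn_Ico hb hhi
  have hp : p ≤ p + n * h := le_add_of_nonneg_right (by positivity)
  rw [← integral_Ioc_eq_integral_Ioo, ← intervalIntegral.integral_of_le
      (hap.trans (hp.trans hb)),
    ← intervalIntegral.integral_add_adjacent_intervals (hlo_int.trans hmid_int) hhi_int,
    ← intervalIntegral.integral_add_adjacent_intervals hlo_int hmid_int,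
    intervalIntegral_of_eqOn_Ico hap hlo, intervalIntegral_uniform_step hh hmid,
    intervalIntegral_of_eqOn_Ico hb hhi]

theorem antitoneOn_Ico_of_three_pieces (hlo : ∀ x ∈ Ico a p, g x = c)
    (hmid : ∀ i : Fin n, ∀ x ∈ Ico (p + i * h) (p + (i + 1) * h), g x = v i)
    (hhi : ∀ x ∈ Ico (p + n * h) b, g x = d) (hh : 0 < h) (hv : Antitone v)
    (hvc : ∀ i, v i ≤ c) (hdv : ∀ i, d ≤ v i) (hdc : d ≤ c) : AntitoneOn g (Ico a b) := by
  have hlo_mid : AntitoneOn g (Ico a (p + n * h)) := by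
    refine (antitoneOn_Ico_of_eqOn_Ico hlo).Ico_union_Ico (antitoneOn_uniform_step hh hmid hv)
      fun x hx y hy => ?_
    obtain ⟨i, hi⟩ := exists_mem_Ico_uniform hh hy
    rw [hlo x hx, hmid i y hi]
    exact hvc i
  refine hlo_mid.Ico_union_Ico (antitoneOn_Ico_of_eqOn_Ico hhi) fun x hx y hy => ?_
  rw [hhi y hy]
  rcases lt_or_ge x p with hxp | hpx
  · rw [hlo x ⟨hx.1, hxp⟩]
    exact hdc
  · obtain ⟨i, hi⟩ := exists_mem_Ico_uniform hh ⟨hpx, hx.2⟩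
    rw [hmid i x hi]
    exact hdv i

end ThreePieces

theorem sum_fin_natCast_mul_two {R : Type*} [CommRing R] (n : ℕ) :
    (∑ i : Fin n, (i : R)) * 2 = n * (n - 1) := by
  rw [Fin.sum_univ_eq_sum_range (fun i => (i : R))]
  induction n with
  | zero => simp
  | succ n ih => rw [Finset.sum_range_succ, add_mul, ih]; push_cast; ring

section Packing

variable {n : ℕ} (a : Fin n → Bool)

noncomputable def packingStep (k : Fin n) : ℝ :=
  (4/3) * (((n : ℝ) - k) / n + (if a k then 1 else 0) / n) + 1/2

noncomputable def packingTail : ℝ :=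
  2/5 - 4 / (5 * n) - (8 / (5 * (n : ℝ) ^ 2)) * ∑ k : Fin n, (if a k then (1:ℝ) else 0)

theorem packingStep_antitone : Antitone (packingStep a) := by
  intro k l hkl
  rcases hkl.eq_or_lt with rfl | hlt
  · rfl
  have hkl' : (k : ℝ) + 1 ≤ l := by exact_mod_cast hlt
  have : ((n : ℝ) - l + (if a l then 1 else 0)) ≤ n - k + (if a k then 1 else 0) := by
    split_ifs <;> linarith
  have := div_le_div_of_nonneg_right this (n.cast_nonneg (α := ℝ))
  unfold packingStep
  rw [← add_div, ← add_div]
  linarith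

theorem half_le_packingStep (k : Fin n) : 1/2 ≤ packingStep a k := by
  have : (k : ℝ) ≤ n := by exact_mod_cast k.2.le
  have : 0 ≤ ((n : ℝ) - k) / n + (if a k then 1 else 0) / n := by
    have : (0 : ℝ) ≤ if a k then 1 else 0 := by split_ifs <;> norm_num
    positivity
  unfold packingStep
  linarith

theorem packingStep_le_three (hn : 2 ≤ n) (k : Fin n) : packingStep a k ≤ 3 := by
  have hn' : (2 : ℝ) ≤ n := by exact_mod_cast hn
  have hn0 : (0 : ℝ) < n := by linarith
  have : ((n : ℝ) - k) / n ≤ 1 := by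
    rw [div_le_one hn0]; linarith [k.val.cast_nonneg (α := ℝ)]
  have : (if a k then 1 else 0) / (n : ℝ) ≤ 1/2 := by
    rw [div_le_iff₀ hn0]; split_ifs <;> linarith
  unfold packingStep
  linarith

theorem packingTail_le : packingTail a ≤ 2/5 := by
  have : 0 ≤ 4 / (5 * (n : ℝ))
      + 8 / (5 * (n : ℝ) ^ 2) * ∑ k : Fin n, (if a k then (1:ℝ) else 0) := by
    positivity
  unfold packingTail
  linarith

theorem packing_mass (hn : 1 ≤ n) :
    1/12 * 3 + ∑ k, 1 / (2 * n) * packingStep a k + 5/12 * packingTail a = 1 := by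
  have hn0 : (n : ℝ) ≠ 0 := by positivity
  have hterm (k : Fin n) : 1 / (2 * n) * packingStep a k
      = 2 / (3 * n ^ 2) * ((n : ℝ) - k) + 2 / (3 * n ^ 2) * (if a k then 1 else 0)
        + 1 / (4 * n) := by
    unfold packingStep; field_simp; ring
  have hgauss := sum_fin_natCast_mul_two (R := ℝ) n
  simp only [hterm, packingTail, Finset.sum_add_distrib, ← Finset.mul_sum,
    Finset.sum_sub_distrib, Finset.sum_const, Finset.card_univ, Fintype.card_fin, nsmul_eq_mul]
  field_simp
  linear_combination (-48 : ℝ) * hgauss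

end Packing

/-- The step functions of the packing construction integrate to 1 and, for `n`
sufficiently large, are non-increasing on `(0,1)`. -/
theorem stmt_15 :
    ∃ N : ℕ, ∀ n : ℕ, 1 ≤ n → ∀ a : Fin n → Bool, ∀ g : ℝ → ℝ,
      (∀ x ∈ Ico (0:ℝ) (1/12), g x = 3) →
      (∀ k : Fin n, ∀ x ∈ Ico ((k.val : ℝ) / (2 * n) + 1/12)
          (((k.val : ℝ) + 1) / (2 * n) + 1/12),
        g x = (4/3) * (((n : ℝ) - (k.val : ℝ)) / n + (if a k then 1 else 0) / n) + 1/2) →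
      (∀ x ∈ Ico (7/12 : ℝ) 1,
        g x = 2/5 - 4 / (5 * n)
          - (8 / (5 * (n : ℝ) ^ 2)) * ∑ k : Fin n, (if a k then (1:ℝ) else 0)) →
      (∫ x in Ioo (0:ℝ) 1, g x = 1) ∧
      (N ≤ n → AntitoneOn g (Ioo (0:ℝ) 1)) := by
  refine ⟨2, fun n hn a g hlo hmid hhi => ?_⟩
  have hh : (0 : ℝ) < 1 / (2 * n) := by positivity
  have hend : 1/12 + n * (1 / (2 * n)) = (7/12 : ℝ) := by field_simp; ring
  have hmid' : ∀ k : Fin n,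
      ∀ x ∈ Ico ((1/12 : ℝ) + k * (1 / (2 * n))) (1/12 + (k + 1) * (1 / (2 * n))),
        g x = packingStep a k := by
    have e (y : ℝ) : y / (2 * n) + 1/12 = 1/12 + y * (1 / (2 * n)) := by ring
    intro k x hx
    exact hmid k x (by simpa only [e] using hx)
  have hhi' : ∀ x ∈ Ico ((1/12 : ℝ) + n * (1 / (2 * n))) 1, g x = packingTail a :=
    hend ▸ hhi
  refine ⟨?_, fun hn2 => ?_⟩
  · rw [integral_Ioo_of_three_pieces hlo hmid' hhi' (by norm_num) hh.le (by rw [hend]; norm_num),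
      hend]
    linarith [packing_mass a hn]
  · refine (antitoneOn_Ico_of_three_pieces hlo hmid' hhi' hh (packingStep_antitone a)
      (packingStep_le_three a hn2) (fun k => ?_) ?_).mono Ioo_subset_Ico_self
    · linarith [packingTail_le a, half_le_packingStep a k]
    · linarith [packingTail_le a]
end

section
/- Separation bound for the packing functions: with g_a as above, if a, a' ∈ {0,1}ⁿ satisfy Hamming distance d_h(a,a') ≥ ⌊n/16⌋ then ∫_{1/12}^{7/12} |g_a(x) − g_{a'}(x)|² dx ≥ d_h(a,a') · (1/(2n)) · (4/(3n))² ≥ (1/384)·n^{-2} for n ≥ 16. -/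
/-!
On the `k`-th subinterval of length `1/(2n)` both `g` and `g'` are constant, and they differ by
`4/(3n)` exactly when `a k ≠ a' k`; so the integral equals `d_h(a,a') · (1/(2n)) · (4/(3n))²`
exactly. The numerical bound uses `⌊n/16⌋ ≥ (n - 15)/16`, which beats `3n/1024` once `n ≥ 16`.
-/

open MeasureTheory Set

lemma ae_restrict_uIoc_eq_of_eqOn_Ico {f g : ℝ → ℝ} {p q : ℝ} (hpq : p ≤ q)
    (h : EqOn f g (Ico p q)) : f =ᵐ[volume.restrict (uIoc p q)] g := by
  rw [Filter.EventuallyEq, ae_restrict_iff' measurableSet_uIoc]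
  filter_upwards [Measure.ae_ne volume q] with x hxq hx
  rw [uIoc_of_le hpq] at hx
  exact h ⟨hx.1.le, lt_of_le_of_ne hx.2 hxq⟩

lemma intervalIntegral_eq_of_eqOn_Ico {f : ℝ → ℝ} {c p q : ℝ} (hpq : p ≤ q)
    (h : EqOn f (fun _ => c) (Ico p q)) : ∫ x in p..q, f x = (q - p) * c := by
  rw [intervalIntegral.integral_congr_ae_restrict (ae_restrict_uIoc_eq_of_eqOn_Ico hpq h),
    intervalIntegral.integral_const, smul_eq_mul]

lemma intervalIntegrable_of_eqOn_Ico_s16 {f : ℝ → ℝ} {c p q : ℝ} (hpq : p ≤ q)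
    (h : EqOn f (fun _ => c) (Ico p q)) : IntervalIntegrable f volume p q :=
  intervalIntegrable_const.congr_ae (ae_restrict_uIoc_eq_of_eqOn_Ico hpq h).symm

lemma intervalIntegral_eq_sum_of_eqOn_Ico {f : ℝ → ℝ} {n : ℕ} {L : ℕ → ℝ} {c : Fin n → ℝ}
    (hL : ∀ k, L k ≤ L (k + 1)) (hf : ∀ k : Fin n, EqOn f (fun _ => c k) (Ico (L k) (L (k + 1)))) :
    ∫ x in L 0..L n, f x = ∑ k : Fin n, (L (k + 1) - L k) * c k := by
  rw [← intervalIntegral.sum_integral_adjacent_intervals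
    fun k hk => intervalIntegrable_of_eqOn_Ico_s16 (hL k) (hf ⟨k, hk⟩), Finset.sum_range]
  exact Finset.sum_congr rfl fun k _ => intervalIntegral_eq_of_eqOn_Ico (hL k) (hf k)

lemma sq_sub_of_bool_shift (c d t n : ℝ) (b b' : Bool) :
    (c * (t + (if b then 1 else 0) / n) + d - (c * (t + (if b' then 1 else 0) / n) + d)) ^ 2
      = if b = b' then 0 else (c / n) ^ 2 := by
  cases b <;> cases b' <;> simp <;> ring

lemma sum_ite_eq_zero_eq_hammingDist_mul {ι β : Type*} [Fintype ι] [DecidableEq β]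
    (a a' : ι → β) (v : ℝ) :
    ∑ k, (if a k = a' k then 0 else v) = hammingDist a a' * v := by
  rw [hammingDist, Finset.sum_ite, Finset.sum_const_zero, zero_add, Finset.sum_const, nsmul_eq_mul]

lemma one_div_le_of_div_sixteen_le {n d : ℕ} (hn : 16 ≤ n) (hd : n / 16 ≤ d) :
    1 / (384 * (n : ℝ) ^ 2) ≤ (d : ℝ) * (1 / (2 * n)) * (4 / (3 * n)) ^ 2 := by
  have hnR : (16 : ℝ) ≤ n := by exact_mod_cast hn
  have hdR : (n : ℝ) ≤ 16 * d + 15 := by exact_mod_cast (by omega : n ≤ 16 * d + 15)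
  rw [show (d : ℝ) * (1 / (2 * n)) * (4 / (3 * n)) ^ 2 = 8 * d / (9 * n ^ 3) by field_simp; ring,
    div_le_div_iff₀ (by positivity) (by positivity)]
  nlinarith

/-- Separation bound for the packing step functions in terms of the Hamming
distance of the labels. -/
theorem stmt_16 (n : ℕ) (hn : 16 ≤ n) (a a' : Fin n → Bool) (g g' : ℝ → ℝ)
    (hg : ∀ k : Fin n, ∀ x ∈ Ico ((k.val : ℝ) / (2 * n) + 1/12)
        (((k.val : ℝ) + 1) / (2 * n) + 1/12),
      g x = (4/3) * (((n : ℝ) - (k.val : ℝ)) / n + (if a k then 1 else 0) / n) + 1/2)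
    (hg' : ∀ k : Fin n, ∀ x ∈ Ico ((k.val : ℝ) / (2 * n) + 1/12)
        (((k.val : ℝ) + 1) / (2 * n) + 1/12),
      g' x = (4/3) * (((n : ℝ) - (k.val : ℝ)) / n + (if a' k then 1 else 0) / n) + 1/2)
    (hdist : n / 16 ≤ hammingDist a a') :
    (hammingDist a a' : ℝ) * (1 / (2 * n)) * (4 / (3 * n)) ^ 2
        ≤ ∫ x in Ioo (1/12 : ℝ) (7/12), (g x - g' x) ^ 2 ∧
    1 / (384 * (n : ℝ) ^ 2)
        ≤ (hammingDist a a' : ℝ) * (1 / (2 * n)) * (4 / (3 * n)) ^ 2 := by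
  let L : ℕ → ℝ := fun k => k / (2 * n) + 1/12
  have hstep (k : ℕ) : L (k + 1) - L k = 1 / (2 * n) := by simp only [L]; push_cast; ring
  have hmono (k : ℕ) : L k ≤ L (k + 1) := by
    linarith [hstep k, (by positivity : (0 : ℝ) ≤ 1 / (2 * n))]
  have hpiece (k : Fin n) : EqOn (fun x => (g x - g' x) ^ 2)
      (fun _ => if a k = a' k then 0 else (4 / (3 * n)) ^ 2) (Ico (L k) (L (k + 1))) := by
    intro x hx
    have hx' : x ∈ Ico ((k.val : ℝ) / (2 * n) + 1/12) (((k.val : ℝ) + 1) / (2 * n) + 1/12) := by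
      simpa [L] using hx
    simp only [hg k x hx', hg' k x hx', sq_sub_of_bool_shift, div_div]
  have hintegral : ∫ x in Ioo (1/12 : ℝ) (7/12), (g x - g' x) ^ 2
      = (hammingDist a a' : ℝ) * (1 / (2 * n)) * (4 / (3 * n)) ^ 2 := by
    rw [← integral_Ioc_eq_integral_Ioo, ← intervalIntegral.integral_of_le (by norm_num),
      show (1/12 : ℝ) = L 0 by simp [L], show (7/12 : ℝ) = L n by simp only [L]; field_simp; ring,
      intervalIntegral_eq_sum_of_eqOn_Ico hmono hpiece]
    simp only [hstep, ← Finset.mul_sum, sum_ite_eq_zero_eq_hammingDist_mul]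
    ring
  exact ⟨hintegral.ge, one_div_le_of_div_sixteen_le hn hdist⟩
end
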